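/- For every (r_i, r_j, r_k) ∈ ℝ³_{>0}, the extended inner angle θ̃_i of a generalized hyperbolic inversive-distance triangle with nonnegative inversive distances satisfies 0 ≤ θ̃_i ≤ π - Λ(I_jk). -/

import Mathlib

open Real

noncomputable def Lambda (x : ℝ) : ℝ :=
  if x ≤ -1 then π else if x ≤ 1 then arccos x else 0

noncomputable def arcosh (x : ℝ) : ℝ := Real.log (x + Real.sqrt (x ^ 2 - 1))

/-- Hyperbolic edge length of two circles of radii `r, s` with inversive distance `I`. -/
noncomputable def hlen (r s I : ℝ) : ℝ :=
  _root_.arcosh (Real.cosh r * Real.cosh s + I * Real.sinh r * Real.sinh s)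

/-!
Write `l_ij, l_ik, l_jk` for the edge lengths. Since `I_ij ≥ 0` and the radii are positive,
`cosh l_ij ≥ cosh r_j`, so `l_ij ≥ r_j`, and likewise `l_ik ≥ r_k`. Hence
`cosh l_jk = cosh r_j cosh r_k + I_jk sinh r_j sinh r_k
  ≤ cosh l_ij cosh l_ik + I_jk sinh l_ij sinh l_ik`,
i.e. the argument of `Λ` is at least `-I_jk`. Finally `Λ` is `arccos` (which already clamps
outside `[-1, 1]`), so it is antitone with values in `[0, π]` and `Λ(-I) = π - Λ(I)`.
-/

theorem Lambda_eq_arccos : Lambda = arccos := by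
  funext x
  unfold Lambda
  split_ifs with h₁ h₂
  · exact (arccos_of_le_neg_one h₁).symm
  · rfl
  · exact (arccos_of_one_le (not_le.1 h₂).le).symm

theorem arccos_le_pi_sub_arccos {x y : ℝ} (h : -y ≤ x) : arccos x ≤ π - arccos y :=
  arccos_neg y ▸ antitone_arccos h

theorem hlen_eq_arcosh (r s I : ℝ) :
    hlen r s I = Real.arcosh (cosh r * cosh s + I * sinh r * sinh s) :=
  rfl

section hlen

variable {r s I : ℝ}

theorem cosh_le_cosh_mul_cosh_add (hr : 0 ≤ r) (hs : 0 ≤ s) (hI : 0 ≤ I) :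
    cosh s ≤ cosh r * cosh s + I * sinh r * sinh s := by
  have : 0 ≤ I * sinh r * sinh s := by
    have := sinh_nonneg_iff.2 hr
    have := sinh_nonneg_iff.2 hs
    positivity
  nlinarith [one_le_cosh r, cosh_pos s]

theorem cosh_hlen (hr : 0 ≤ r) (hs : 0 ≤ s) (hI : 0 ≤ I) :
    cosh (hlen r s I) = cosh r * cosh s + I * sinh r * sinh s := by
  rw [hlen_eq_arcosh]
  exact cosh_arcosh ((one_le_cosh s).trans (cosh_le_cosh_mul_cosh_add hr hs hI))

theorem le_hlen (hr : 0 ≤ r) (hs : 0 ≤ s) (hI : 0 ≤ I) : s ≤ hlen r s I := by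
  have hle := cosh_le_cosh_mul_cosh_add hr hs hI
  rw [hlen_eq_arcosh]
  calc s = Real.arcosh (cosh s) := (arcosh_cosh hs).symm
    _ ≤ _ := (arcosh_le_arcosh (cosh_pos s) ((cosh_pos s).trans_le hle)).2 hle

end hlen

theorem cosh_hlen_le_cosh_mul_cosh_add {r s t I J K : ℝ}
    (hr : 0 ≤ r) (hs : 0 ≤ s) (ht : 0 ≤ t) (hI : 0 ≤ I) (hJ : 0 ≤ J) (hK : 0 ≤ K) :
    cosh (hlen s t I) ≤
      cosh (hlen r s J) * cosh (hlen r t K) + I * sinh (hlen r s J) * sinh (hlen r t K) := by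
  have hs' := le_hlen hr hs hJ
  have ht' := le_hlen hr ht hK
  have hcs : cosh s ≤ cosh (hlen r s J) := cosh_le_cosh.2 (abs_le_abs_of_nonneg hs hs')
  have hct : cosh t ≤ cosh (hlen r t K) := cosh_le_cosh.2 (abs_le_abs_of_nonneg ht ht')
  have hss : sinh s ≤ sinh (hlen r s J) := sinh_le_sinh.2 hs'
  have hst : sinh t ≤ sinh (hlen r t K) := sinh_le_sinh.2 ht'
  have := sinh_nonneg_iff.2 hs
  have := sinh_nonneg_iff.2 ht
  have : 0 ≤ I * sinh (hlen r s J) := mul_nonneg hI (by linarith)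
  rw [cosh_hlen hs ht hI]
  gcongr

/-- For every `(r_i, r_j, r_k) ∈ ℝ³_{>0}`, the extended inner angle `θ̃_i` of a
generalized hyperbolic inversive-distance triangle with nonnegative inversive
distances satisfies `0 ≤ θ̃_i ≤ π - Λ(I_jk)`. -/
theorem extended_angle_bounds (ri rj rk Iij Ijk Iik : ℝ)
    (hri : 0 < ri) (hrj : 0 < rj) (hrk : 0 < rk)
    (hIij : 0 ≤ Iij) (hIjk : 0 ≤ Ijk) (hIik : 0 ≤ Iik) :
    0 ≤ Lambda ((Real.cosh (hlen ri rj Iij) * Real.cosh (hlen ri rk Iik)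
        - Real.cosh (hlen rj rk Ijk)) /
      (Real.sinh (hlen ri rj Iij) * Real.sinh (hlen ri rk Iik))) ∧
    Lambda ((Real.cosh (hlen ri rj Iij) * Real.cosh (hlen ri rk Iik)
        - Real.cosh (hlen rj rk Ijk)) /
      (Real.sinh (hlen ri rj Iij) * Real.sinh (hlen ri rk Iik))) ≤ π - Lambda Ijk := by
  have hsinh_pos : 0 < sinh (hlen ri rj Iij) * sinh (hlen ri rk Iik) :=
    mul_pos (sinh_pos_iff.2 (hrj.trans_le (le_hlen hri.le hrj.le hIij)))
      (sinh_pos_iff.2 (hrk.trans_le (le_hlen hri.le hrk.le hIik)))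
  have hcosh_bound := cosh_hlen_le_cosh_mul_cosh_add hri.le hrj.le hrk.le hIjk hIij hIik
  have harg : -Ijk ≤ (cosh (hlen ri rj Iij) * cosh (hlen ri rk Iik) - cosh (hlen rj rk Ijk)) /
      (sinh (hlen ri rj Iij) * sinh (hlen ri rk Iik)) := by
    rw [le_div_iff₀ hsinh_pos]
    linarith
  rw [Lambda_eq_arccos]
  exact ⟨arccos_nonneg _, arccos_le_pi_sub_arccos harg⟩
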